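/- arXiv:1804.11169 — 2 statements merged into one kernel-verified Lean document; each statement's English description precedes it below -/
import Mathlib

section
/- Let d₁, d₂ ∈ ℝ² be linearly independent, let k : ℝ² → ℝ and Z : ℝ² → ℝ² be smooth periodic, and let θ : ℝ² → ℝ be smooth and (m,n)-semiperiodic for some integers m,n. Then the following are equivalent: (a) for every smooth periodic β : ℝ² → ℝ, the first-variation integral ∫_Q [(Δθ(ξ) + div Z(ξ))·Δβ(ξ) + k(ξ)²·⟨∇θ(ξ) + Z(ξ), ∇β(ξ)⟩] dξ vanishes; (b) Δ(Δθ + div Z) = div(k²·(∇θ + Z)) everywhere on ℝ². (This is the Euler–Lagrange characterization, in terms of angle functions, of biharmonic unit vector fields on a 2-torus, i.e. the paper's Theorem 5.6(i) transcribed to the flat conformal representative.) -/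
open MeasureTheory Real

noncomputable section

/-- The Euclidean plane ℝ². -/
abbrev E2 := EuclideanSpace ℝ (Fin 2)

/-- The flat Laplacian Δf = ∂²f/∂ξ₁² + ∂²f/∂ξ₂² on ℝ². -/
def lap (f : E2 → ℝ) (x : E2) : ℝ :=
  ∑ i : Fin 2,
    fderiv ℝ (fun y => fderiv ℝ f y (EuclideanSpace.single i 1)) x (EuclideanSpace.single i 1)

/-- The gradient of a function on ℝ², as a vector field. -/
def grad2 (f : E2 → ℝ) (x : E2) : E2 :=
  (WithLp.equiv 2 (Fin 2 → ℝ)).symm fun i => fderiv ℝ f x (EuclideanSpace.single i 1)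

/-- The divergence div X = ∂X₁/∂ξ₁ + ∂X₂/∂ξ₂ of a vector field on ℝ². -/
def div2 (X : E2 → E2) (x : E2) : ℝ :=
  ∑ i : Fin 2, fderiv ℝ (fun y => X y i) x (EuclideanSpace.single i 1)

/-- The fundamental cell Q = {s·d₁ + t·d₂ : s, t ∈ [0,1]}. -/
def cell (d₁ d₂ : E2) : Set E2 :=
  {ξ | ∃ s t : ℝ, s ∈ Set.Icc (0 : ℝ) 1 ∧ t ∈ Set.Icc (0 : ℝ) 1 ∧ ξ = s • d₁ + t • d₂}

section Basic

variable {G F : Type*} [NormedAddCommGroup G] [NormedSpace ℝ G]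
  [NormedAddCommGroup F] [NormedSpace ℝ F]

lemma contDiff_top_partial {f : G → F} (hf : ContDiff ℝ (⊤ : ℕ∞) f) (v : G) :
    ContDiff ℝ (⊤ : ℕ∞) fun y => fderiv ℝ f y v := by
  have h1 : ContDiff ℝ (⊤ : ℕ∞) fun y => fderiv ℝ f y := hf.fderiv_right (by simp)
  exact (ContinuousLinearMap.apply ℝ F v).contDiff.comp h1

lemma fderiv_coord {X : E2 → E2} {x : E2} (hX : DifferentiableAt ℝ X x) (i : Fin 2) (v : E2) :
    fderiv ℝ (fun y => X y i) x v = fderiv ℝ X x v i := by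
  have h : HasFDerivAt (fun y => X y i)
      ((EuclideanSpace.proj (𝕜 := ℝ) i).comp (fderiv ℝ X x)) x :=
    (EuclideanSpace.proj (𝕜 := ℝ) i).hasFDerivAt.comp x hX.hasFDerivAt
  rw [h.fderiv]; rfl

lemma div2_eq {X : E2 → E2} {x : E2} (hX : DifferentiableAt ℝ X x) :
    div2 X x = ∑ i : Fin 2, fderiv ℝ X x (EuclideanSpace.single i 1) i :=
  Finset.sum_congr rfl fun i _ => fderiv_coord hX i _

lemma grad2_apply (f : E2 → ℝ) (x : E2) (i : Fin 2) :
    grad2 f x i = fderiv ℝ f x (EuclideanSpace.single i 1) := rfl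

lemma grad2_eq_sum (f : E2 → ℝ) (x : E2) :
    grad2 f x = ∑ i : Fin 2,
      fderiv ℝ f x (EuclideanSpace.single i 1) • EuclideanSpace.single i 1 := by
  ext j
  rw [grad2_apply, Fin.sum_univ_two]
  simp only [PiLp.add_apply, PiLp.smul_apply, EuclideanSpace.single_apply, smul_eq_mul]
  fin_cases j <;> simp

lemma grad2_contDiff {f : E2 → ℝ} (hf : ContDiff ℝ (⊤ : ℕ∞) f) :
    ContDiff ℝ (⊤ : ℕ∞) (grad2 f) := by
  have : grad2 f = fun x => ∑ i : Fin 2,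
      fderiv ℝ f x (EuclideanSpace.single i 1) • EuclideanSpace.single i 1 :=
    funext (grad2_eq_sum f)
  rw [this]
  exact ContDiff.sum fun i _ => (contDiff_top_partial hf _).smul contDiff_const

lemma coord_contDiff {X : E2 → E2} (hX : ContDiff ℝ (⊤ : ℕ∞) X) (i : Fin 2) :
    ContDiff ℝ (⊤ : ℕ∞) fun y => X y i :=
  (EuclideanSpace.proj (𝕜 := ℝ) i).contDiff.comp hX

lemma div2_contDiff {X : E2 → E2} (hX : ContDiff ℝ (⊤ : ℕ∞) X) :
    ContDiff ℝ (⊤ : ℕ∞) (div2 X) :=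
  ContDiff.sum fun i _ => contDiff_top_partial (coord_contDiff hX i) _

lemma lap_contDiff {f : E2 → ℝ} (hf : ContDiff ℝ (⊤ : ℕ∞) f) :
    ContDiff ℝ (⊤ : ℕ∞) (lap f) :=
  ContDiff.sum fun i _ => contDiff_top_partial (contDiff_top_partial hf _) _

lemma fderiv_shift {f : E2 → F} (hf : Differentiable ℝ f) {c : E2} {a : F}
    (h : ∀ y, f (y + c) = f y + a) (x : E2) :
    fderiv ℝ f (x + c) = fderiv ℝ f x := by
  have ht : HasFDerivAt (fun y : E2 => y + c) (ContinuousLinearMap.id ℝ E2) x :=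
    (hasFDerivAt_id x).add_const c
  have H : HasFDerivAt (fun y => f (y + c)) (fderiv ℝ f (x + c)) x := by
    exact (hf (x + c)).hasFDerivAt.comp x ht
  have h2 : (fun y => f (y + c)) = fun y => f y + a := funext h
  rw [h2] at H
  exact H.unique ((hf x).hasFDerivAt.add_const a)

lemma grad2_shift {f : E2 → ℝ} (hf : Differentiable ℝ f) {c : E2} {a : ℝ}
    (h : ∀ y, f (y + c) = f y + a) (x : E2) :
    grad2 f (x + c) = grad2 f x := by
  unfold grad2
  congr 1
  funext i
  rw [fderiv_shift hf h x]

lemma lap_shift {f : E2 → ℝ} (hf : ContDiff ℝ (⊤ : ℕ∞) f) {c : E2} {a : ℝ}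
    (h : ∀ y, f (y + c) = f y + a) (x : E2) :
    lap f (x + c) = lap f x := by
  unfold lap
  refine Finset.sum_congr rfl fun i _ => ?_
  have hg : ∀ y, (fun z => fderiv ℝ f z (EuclideanSpace.single i 1)) (y + c)
      = (fun z => fderiv ℝ f z (EuclideanSpace.single i 1)) y + 0 := by
    intro y; simp [fderiv_shift (hf.differentiable (by simp)) h y]
  rw [fderiv_shift ((contDiff_top_partial hf _).differentiable (by simp)) hg x]

lemma div2_shift {X : E2 → E2} (hX : ContDiff ℝ (⊤ : ℕ∞) X) {c : E2}
    (h : ∀ y, X (y + c) = X y) (x : E2) :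
    div2 X (x + c) = div2 X x := by
  unfold div2
  refine Finset.sum_congr rfl fun i _ => ?_
  have hg : ∀ y, (fun z => X z i) (y + c) = (fun z => X z i) y + 0 := by
    intro y; simp [h y]
  rw [fderiv_shift ((coord_contDiff hX i).differentiable (by simp)) hg x]

end Basic


lemma traceP2 (N : (Fin 2 → ℝ) →ₗ[ℝ] (Fin 2 → ℝ)) :
    LinearMap.trace ℝ _ N = ∑ i : Fin 2, N (Pi.single i 1) i := by
  rw [LinearMap.trace_eq_matrix_trace ℝ (Pi.basisFun ℝ (Fin 2)), Matrix.trace]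
  refine Finset.sum_congr rfl fun i _ => ?_
  rw [Matrix.diag_apply, LinearMap.toMatrix_apply]
  simp

lemma traceE2 (M : EuclideanSpace ℝ (Fin 2) →ₗ[ℝ] EuclideanSpace ℝ (Fin 2)) :
    LinearMap.trace ℝ _ M = ∑ i : Fin 2, M (EuclideanSpace.single i 1) i := by
  rw [LinearMap.trace_eq_matrix_trace ℝ (EuclideanSpace.basisFun (Fin 2) ℝ).toBasis, Matrix.trace]
  refine Finset.sum_congr rfl fun i _ => ?_
  rw [Matrix.diag_apply, LinearMap.toMatrix_apply]
  simp [OrthonormalBasis.coe_toBasis, EuclideanSpace.basisFun_apply,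
    OrthonormalBasis.coe_toBasis_repr_apply, EuclideanSpace.basisFun_repr]

lemma cube_div_zero (W : (Fin 2 → ℝ) → (Fin 2 → ℝ)) (hW : ContDiff ℝ (⊤ : ℕ∞) W)
    (hper : ∀ (x : Fin 2 → ℝ) (i : Fin 2), W (x + Pi.single i 1) = W x) :
    (∫ x in Set.Icc (0 : Fin 2 → ℝ) 1, ∑ i, fderiv ℝ W x (Pi.single i 1) i) = 0 := by
  have hdiv_cont : Continuous fun x => ∑ i, fderiv ℝ W x (Pi.single i 1) i := by
    refine continuous_finset_sum _ fun i _ => ?_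
    exact (continuous_apply i).comp (contDiff_top_partial hW (Pi.single i 1)).continuous
  have key := MeasureTheory.integral_divergence_of_hasFDerivAt_off_countable
    (a := (0 : Fin 2 → ℝ)) (b := (1 : Fin 2 → ℝ)) (n := 1) zero_le_one W (fun x => fderiv ℝ W x)
    ∅ Set.countable_empty hW.continuous.continuousOn
    (fun x _ => (hW.differentiable (by simp) x).hasFDerivAt)
    (hdiv_cont.continuousOn.integrableOn_compact isCompact_Icc)
  rw [key]
  refine Finset.sum_eq_zero fun i _ => ?_
  have hface : ∀ x : Fin 1 → ℝ,
      (Fin.insertNth i (1 : ℝ) x : Fin 2 → ℝ)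
        = (Fin.insertNth i (0 : ℝ) x : Fin 2 → ℝ) + Pi.single i 1 := by
    intro x
    funext j
    rcases eq_or_ne j i with h | h
    · subst h; simp
    · obtain ⟨j', rfl⟩ := Fin.exists_succAbove_eq h
      simp [Fin.insertNth_apply_succAbove, Pi.single_eq_of_ne (Fin.succAbove_ne i j')]
  have hWW : ∀ x : Fin 1 → ℝ,
      W (Fin.insertNth i ((1 : Fin 2 → ℝ) i) x) i
        = W (Fin.insertNth i ((0 : Fin 2 → ℝ) i) x) i := by
    intro x
    have : ((1 : Fin 2 → ℝ) i) = (1 : ℝ) := rfl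
    rw [this, hface x]
    have h0 : ((0 : Fin 2 → ℝ) i) = (0 : ℝ) := rfl
    rw [h0, hper]
  simp only [hWW, sub_self]

section L1

lemma integral_div2_cell_eq_zero (d₁ d₂ : E2) (hd : LinearIndependent ℝ ![d₁, d₂])
    (X : E2 → E2) (hX : ContDiff ℝ (⊤ : ℕ∞) X)
    (hX1 : ∀ ξ, X (ξ + d₁) = X ξ) (hX2 : ∀ ξ, X (ξ + d₂) = X ξ) :
    (∫ ξ in cell d₁ d₂, div2 X ξ) = 0 := by
  classical
  have hcard : Fintype.card (Fin 2) = Module.finrank ℝ E2 := by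
    simp [finrank_euclideanSpace_fin]
  set B : Module.Basis (Fin 2) ℝ E2 := basisOfLinearIndependentOfCardEqFinrank hd hcard with hB
  set Aₗ : E2 ≃ₗ[ℝ] E2 := (EuclideanSpace.basisFun (Fin 2) ℝ).toBasis.equiv B (Equiv.refl _)
    with hAₗ
  set A : E2 ≃L[ℝ] E2 := Aₗ.toContinuousLinearEquiv with hAdef
  have hA : ∀ i, A (EuclideanSpace.single i 1) = ![d₁, d₂] i := by
    intro i
    have h1 : (EuclideanSpace.basisFun (Fin 2) ℝ).toBasis i = EuclideanSpace.single i 1 := by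
      rw [OrthonormalBasis.coe_toBasis, EuclideanSpace.basisFun_apply]
    have h2 : A (EuclideanSpace.single i 1)
        = Aₗ ((EuclideanSpace.basisFun (Fin 2) ℝ).toBasis i) := by rw [h1]; rfl
    rw [h2, hAₗ, Module.Basis.equiv_apply, Equiv.refl_apply, hB,
      coe_basisOfLinearIndependentOfCardEqFinrank]
  set e := (MeasurableEquiv.toLp 2 (Fin 2 → ℝ)).symm with he
  set UC : Set E2 := e ⁻¹' (Set.Icc 0 1) with hUC
  have hUCmeas : MeasurableSet UC := e.measurable measurableSet_Icc
  have hmemUC : ∀ x : E2, x ∈ UC ↔ ∀ i, x i ∈ Set.Icc (0 : ℝ) 1 := by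
    intro x
    simp only [hUC, Set.mem_preimage, Set.mem_Icc, Pi.le_def]
    constructor
    · rintro ⟨h1, h2⟩ i; exact ⟨h1 i, h2 i⟩
    · intro h; exact ⟨fun i => (h i).1, fun i => (h i).2⟩
  have hdecomp : ∀ x : E2,
      x = x 0 • EuclideanSpace.single 0 1 + x 1 • EuclideanSpace.single 1 1 := by
    intro x
    ext j
    simp only [PiLp.add_apply, PiLp.smul_apply, EuclideanSpace.single_apply, smul_eq_mul]
    fin_cases j <;> simp
  have hAx : ∀ x : E2, A x = x 0 • d₁ + x 1 • d₂ := by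
    intro x
    conv_lhs => rw [hdecomp x]
    rw [map_add, _root_.map_smul, _root_.map_smul, hA 0, hA 1]
    simp
  have hcell : cell d₁ d₂ = A '' UC := by
    ext ξ
    constructor
    · rintro ⟨s, t, hs, ht, rfl⟩
      refine ⟨s • EuclideanSpace.single 0 1 + t • EuclideanSpace.single 1 1, ?_, ?_⟩
      · rw [hmemUC]
        intro i
        fin_cases i <;>
          simpa [PiLp.add_apply, PiLp.smul_apply, EuclideanSpace.single_apply] using
            (by assumption : _)
      · rw [hAx]
        simp [PiLp.add_apply, PiLp.smul_apply, EuclideanSpace.single_apply]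
    · rintro ⟨x, _, rfl⟩
      rw [hmemUC] at *
      exact ⟨x 0, x 1, by tauto, by tauto, (hAx x)⟩
  -- change of variables
  have hcov := MeasureTheory.integral_image_eq_integral_abs_det_fderiv_smul
    (μ := volume) hUCmeas
    (f' := fun _ : E2 => (A : E2 →L[ℝ] E2))
    (fun x _ => (A.hasFDerivAt (x := x)).hasFDerivWithinAt)
    (A.injective.injOn) (div2 X)
  rw [hcell, hcov, integral_smul]
  -- the pulled-back vector field on the cube
  set κ : (Fin 2 → ℝ) ≃L[ℝ] E2 := (EuclideanSpace.equiv (Fin 2) ℝ).symm with hκdef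
  set C : (Fin 2 → ℝ) ≃L[ℝ] E2 := κ.trans A with hCdef
  set W : (Fin 2 → ℝ) → (Fin 2 → ℝ) := fun y => C.symm (X (C y)) with hWdef
  have hCsingle : ∀ i : Fin 2, C (Pi.single i 1) = ![d₁, d₂] i := by
    intro i
    have : κ (Pi.single i 1) = EuclideanSpace.single i 1 := rfl
    rw [hCdef, ContinuousLinearEquiv.trans_apply, this, hA]
  have hWsmooth : ContDiff ℝ (⊤ : ℕ∞) W :=
    C.symm.contDiff.comp (hX.comp C.contDiff)
  have hWper : ∀ (y : Fin 2 → ℝ) (i : Fin 2), W (y + Pi.single i 1) = W y := by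
    intro y i
    have hXper' : ∀ (j : Fin 2) (ξ : E2), X (ξ + ![d₁, d₂] j) = X ξ := by
      intro j
      fin_cases j
      · exact hX1
      · exact hX2
    rw [hWdef]
    simp only [map_add, hCsingle i]
    rw [hXper' i]
  have hpt : ∀ y : Fin 2 → ℝ, div2 X (C y) = ∑ i, fderiv ℝ W y (Pi.single i 1) i := by
    intro y
    set M := fderiv ℝ X (C y) with hM
    have hXd : HasFDerivAt X M (C y) := (hX.differentiable (by simp) (C y)).hasFDerivAt
    have hWd : HasFDerivAt W
        ((C.symm : E2 →L[ℝ] (Fin 2 → ℝ)).comp (M.comp (C : (Fin 2 → ℝ) →L[ℝ] E2))) y := by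
      have h1 : HasFDerivAt (fun z => X (C z)) (M.comp (C : (Fin 2 → ℝ) →L[ℝ] E2)) y :=
        hXd.comp y C.hasFDerivAt
      exact C.symm.hasFDerivAt.comp y h1
    rw [hWd.fderiv]
    have hlhs : div2 X (C y) = LinearMap.trace ℝ E2 (M : E2 →ₗ[ℝ] E2) := by
      rw [div2_eq (hX.differentiable (by simp) (C y)), traceE2]; rfl
    have hrhs : ∑ i : Fin 2,
        ((C.symm : E2 →L[ℝ] (Fin 2 → ℝ)).comp (M.comp (C : (Fin 2 → ℝ) →L[ℝ] E2)))
          (Pi.single i 1) i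
        = LinearMap.trace ℝ (Fin 2 → ℝ)
            ((C.toLinearEquiv.symm.conj) (M : E2 →ₗ[ℝ] E2)) := by
      rw [traceP2]
      refine Finset.sum_congr rfl fun i _ => rfl
    rw [hlhs, hrhs, LinearMap.trace_conj']
  -- transfer the cube integral through the measure-preserving equivalence
  have htrans := (EuclideanSpace.volume_preserving_symm_measurableEquiv_toLp (Fin 2)).setIntegral_preimage_emb
      (MeasurableEquiv.toLp 2 (Fin 2 → ℝ)).symm.measurableEmbedding
      (fun y : Fin 2 → ℝ => div2 X (A (κ y))) (Set.Icc 0 1)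
  have hsymm : ∀ x : E2, κ (e x) = x := fun x => rfl
  have hintUC : (∫ x in UC, div2 X (A x)) = ∫ y in Set.Icc (0 : Fin 2 → ℝ) 1, div2 X (C y) := by
    rw [hUC, he]
    exact htrans
  rw [hintUC]
  have : (∫ y in Set.Icc (0 : Fin 2 → ℝ) 1, div2 X (C y))
      = ∫ y in Set.Icc (0 : Fin 2 → ℝ) 1, ∑ i, fderiv ℝ W y (Pi.single i 1) i := by
    exact setIntegral_congr_fun measurableSet_Icc fun y _ => hpt y
  rw [this, cube_div_zero W hWsmooth hWper, smul_zero]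

end L1

section Calculus

lemma div2_add {P Q : E2 → E2} (hP : ContDiff ℝ (⊤ : ℕ∞) P) (hQ : ContDiff ℝ (⊤ : ℕ∞) Q)
    (x : E2) : div2 (fun y => P y + Q y) x = div2 P x + div2 Q x := by
  unfold div2
  rw [← Finset.sum_add_distrib]
  refine Finset.sum_congr rfl fun i _ => ?_
  have h : (fun y => (P y + Q y : E2) i) = fun y => P y i + Q y i := rfl
  rw [h, fderiv_fun_add ((coord_contDiff hP i).differentiable (by simp) x)
    ((coord_contDiff hQ i).differentiable (by simp) x)]
  simp

lemma div2_sub {P Q : E2 → E2} (hP : ContDiff ℝ (⊤ : ℕ∞) P) (hQ : ContDiff ℝ (⊤ : ℕ∞) Q)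
    (x : E2) : div2 (fun y => P y - Q y) x = div2 P x - div2 Q x := by
  unfold div2
  rw [← Finset.sum_sub_distrib]
  refine Finset.sum_congr rfl fun i _ => ?_
  have h : (fun y => (P y - Q y : E2) i) = fun y => P y i - Q y i := rfl
  rw [h, fderiv_fun_sub ((coord_contDiff hP i).differentiable (by simp) x)
    ((coord_contDiff hQ i).differentiable (by simp) x)]
  simp

lemma inner_grad2 (g : E2 → ℝ) (v : E2) (x : E2) :
    (inner ℝ (grad2 g x) v : ℝ)
      = ∑ i : Fin 2, fderiv ℝ g x (EuclideanSpace.single i 1) * v i := by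
  rw [PiLp.inner_apply]
  refine Finset.sum_congr rfl fun i _ => ?_
  rw [grad2_apply]
  simp [RCLike.inner_apply, mul_comm]

lemma div2_smul {g : E2 → ℝ} {X : E2 → E2} (hg : ContDiff ℝ (⊤ : ℕ∞) g)
    (hX : ContDiff ℝ (⊤ : ℕ∞) X) (x : E2) :
    div2 (fun y => g y • X y) x = inner ℝ (grad2 g x) (X x) + g x * div2 X x := by
  unfold div2
  have hstep : ∀ i : Fin 2, fderiv ℝ (fun y => (g y • X y : E2) i) x (EuclideanSpace.single i 1)
      = fderiv ℝ g x (EuclideanSpace.single i 1) * X x i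
        + g x * fderiv ℝ (fun y => X y i) x (EuclideanSpace.single i 1) := by
    intro i
    have h1 : (fun y => (g y • X y : E2) i) = fun y => g y * X y i := rfl
    rw [h1, fderiv_fun_mul (hg.differentiable (by simp) x)
      ((coord_contDiff hX i).differentiable (by simp) x)]
    simp only [ContinuousLinearMap.add_apply, ContinuousLinearMap.smul_apply, smul_eq_mul]
    ring
  rw [Finset.sum_congr rfl fun i _ => hstep i, Finset.sum_add_distrib, inner_grad2, ← Finset.mul_sum]

lemma grad2_add {f g : E2 → ℝ} (hf : ContDiff ℝ (⊤ : ℕ∞) f) (hg : ContDiff ℝ (⊤ : ℕ∞) g)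
    (x : E2) : grad2 (fun y => f y + g y) x = grad2 f x + grad2 g x := by
  ext i
  rw [PiLp.add_apply, grad2_apply, grad2_apply, grad2_apply,
    fderiv_fun_add (hf.differentiable (by simp) x) (hg.differentiable (by simp) x)]
  simp

lemma cell_eq_image (d₁ d₂ : E2) :
    cell d₁ d₂ = (fun p : ℝ × ℝ => p.1 • d₁ + p.2 • d₂) ''
      (Set.Icc (0:ℝ) 1 ×ˢ Set.Icc (0:ℝ) 1) := by
  ext ξ
  constructor
  · rintro ⟨s, t, hs, ht, rfl⟩; exact ⟨(s, t), ⟨hs, ht⟩, rfl⟩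
  · rintro ⟨⟨s, t⟩, ⟨hs, ht⟩, rfl⟩; exact ⟨s, t, hs, ht, rfl⟩

lemma cell_compact (d₁ d₂ : E2) : IsCompact (cell d₁ d₂) := by
  rw [cell_eq_image]
  exact (isCompact_Icc.prod isCompact_Icc).image
    (((continuous_fst.smul continuous_const)).add ((continuous_snd.smul continuous_const)))

lemma integrableOn_cell {f : E2 → ℝ} (hf : Continuous f) (d₁ d₂ : E2) :
    IntegrableOn f (cell d₁ d₂) :=
  hf.continuousOn.integrableOn_compact (cell_compact d₁ d₂)

end Calculus

section Vanishing

lemma exists_cellEquiv (d₁ d₂ : E2) (hd : LinearIndependent ℝ ![d₁, d₂]) :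
    ∃ A : E2 ≃L[ℝ] E2, ∀ x : E2, A x = x 0 • d₁ + x 1 • d₂ := by
  classical
  have hcard : Fintype.card (Fin 2) = Module.finrank ℝ E2 := by
    simp [finrank_euclideanSpace_fin]
  set B : Module.Basis (Fin 2) ℝ E2 := basisOfLinearIndependentOfCardEqFinrank hd hcard with hB
  set Aₗ : E2 ≃ₗ[ℝ] E2 := (EuclideanSpace.basisFun (Fin 2) ℝ).toBasis.equiv B (Equiv.refl _)
    with hAₗ
  refine ⟨Aₗ.toContinuousLinearEquiv, ?_⟩
  have hA : ∀ i, Aₗ.toContinuousLinearEquiv (EuclideanSpace.single i 1) = ![d₁, d₂] i := by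
    intro i
    have h1 : (EuclideanSpace.basisFun (Fin 2) ℝ).toBasis i = EuclideanSpace.single i 1 := by
      rw [OrthonormalBasis.coe_toBasis, EuclideanSpace.basisFun_apply]
    have h2 : Aₗ.toContinuousLinearEquiv (EuclideanSpace.single i 1)
        = Aₗ ((EuclideanSpace.basisFun (Fin 2) ℝ).toBasis i) := by rw [h1]; rfl
    rw [h2, hAₗ, Module.Basis.equiv_apply, Equiv.refl_apply, hB,
      coe_basisOfLinearIndependentOfCardEqFinrank]
  have hdecomp : ∀ x : E2,
      x = x 0 • EuclideanSpace.single 0 1 + x 1 • EuclideanSpace.single 1 1 := by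
    intro x
    ext j
    simp only [PiLp.add_apply, PiLp.smul_apply, EuclideanSpace.single_apply, smul_eq_mul]
    fin_cases j <;> simp
  intro x
  conv_lhs => rw [hdecomp x]
  rw [map_add, _root_.map_smul, _root_.map_smul, hA 0, hA 1]
  simp

lemma eq_zero_of_integral_sq (d₁ d₂ : E2) (hd : LinearIndependent ℝ ![d₁, d₂])
    {f : E2 → ℝ} (hf : Continuous f)
    (h1 : ∀ ξ, f (ξ + d₁) = f ξ) (h2 : ∀ ξ, f (ξ + d₂) = f ξ)
    (hint : (∫ ξ in cell d₁ d₂, f ξ * f ξ) = 0) : ∀ ξ, f ξ = 0 := by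
  obtain ⟨A, hAx⟩ := exists_cellEquiv d₁ d₂ hd
  have hnonneg : 0 ≤ᵐ[volume.restrict (cell d₁ d₂)] fun ξ => f ξ * f ξ :=
    Filter.Eventually.of_forall fun ξ => mul_self_nonneg _
  have hintg : Integrable (fun ξ => f ξ * f ξ) (volume.restrict (cell d₁ d₂)) :=
    integrableOn_cell (hf.mul hf) d₁ d₂
  have hae : (fun ξ => f ξ * f ξ) =ᵐ[volume.restrict (cell d₁ d₂)] 0 :=
    (integral_eq_zero_iff_of_nonneg_ae hnonneg hintg).1 hint
  set N : Set E2 := {x | f x ≠ 0} with hN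
  have hNopen : IsOpen N := isOpen_compl_singleton.preimage hf
  have hNmeas0 : volume (N ∩ cell d₁ d₂) = 0 := by
    have h := hae
    rw [Filter.EventuallyEq, Filter.eventually_iff, mem_ae_iff] at h
    have hsets : {x : E2 | f x * f x = (0 : E2 → ℝ) x}ᶜ = N := by
      ext x
      simp [hN, mul_self_eq_zero]
    rw [hsets, Measure.restrict_apply hNopen.measurableSet] at h
    exact h
  have hdet : LinearMap.det ((A : E2 →L[ℝ] E2) : E2 →ₗ[ℝ] E2) ≠ 0 := by
    have := A.toLinearEquiv.isUnit_det'
    exact IsUnit.ne_zero this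
  have hV : ∀ s t : ℝ, s ∈ Set.Ioo (0:ℝ) 1 → t ∈ Set.Ioo (0:ℝ) 1 →
      f (s • d₁ + t • d₂) = 0 := by
    intro s t hs ht
    by_contra hne
    set u : E2 := s • EuclideanSpace.single 0 1 + t • EuclideanSpace.single 1 1 with hu
    have hu0 : u 0 = s := by
      simp [hu, PiLp.add_apply, PiLp.smul_apply, EuclideanSpace.single_apply]
    have hu1 : u 1 = t := by
      simp [hu, PiLp.add_apply, PiLp.smul_apply, EuclideanSpace.single_apply]
    have hAu : A u = s • d₁ + t • d₂ := by rw [hAx, hu0, hu1]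
    set O : Set E2 := (⇑A ⁻¹' N ∩ {x : E2 | x 0 ∈ Set.Ioo (0:ℝ) 1})
        ∩ {x : E2 | x 1 ∈ Set.Ioo (0:ℝ) 1} with hO
    have hOopen : IsOpen O := by
      refine IsOpen.inter (IsOpen.inter (hNopen.preimage A.continuous) ?_) ?_
      · exact isOpen_Ioo.preimage (EuclideanSpace.proj (𝕜 := ℝ) (0 : Fin 2)).continuous
      · exact isOpen_Ioo.preimage (EuclideanSpace.proj (𝕜 := ℝ) (1 : Fin 2)).continuous
    have huO : u ∈ O := by
      refine ⟨⟨?_, ?_⟩, ?_⟩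
      · show f (A u) ≠ 0; rw [hAu]; exact hne
      · show u 0 ∈ Set.Ioo (0:ℝ) 1; rw [hu0]; exact hs
      · show u 1 ∈ Set.Ioo (0:ℝ) 1; rw [hu1]; exact ht
    obtain ⟨r, hr, hball⟩ := Metric.isOpen_iff.1 hOopen u huO
    have himage : ⇑A '' Metric.ball u r ⊆ N ∩ cell d₁ d₂ := by
      rintro _ ⟨w, hw, rfl⟩
      obtain ⟨⟨hw1, hw2⟩, hw3⟩ := hball hw
      refine ⟨hw1, w 0, w 1, ?_, ?_, (hAx w)⟩
      · exact ⟨le_of_lt hw2.1, le_of_lt hw2.2⟩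
      · exact ⟨le_of_lt hw3.1, le_of_lt hw3.2⟩
    have hpos : 0 < volume (⇑A '' Metric.ball u r) := by
      rw [Measure.addHaar_image_continuousLinearEquiv]
      exact ENNReal.mul_pos (by simp [ENNReal.ofReal_pos, abs_pos, hdet]; exact hdet)
        (Metric.measure_ball_pos volume u hr).ne'
    exact absurd (le_antisymm ((measure_mono himage).trans hNmeas0.le) (by simp))
      hpos.ne'
  have hfrac : ∀ s t : ℝ, f (s • d₁ + t • d₂)
      = f (Int.fract s • d₁ + Int.fract t • d₂) := by
    intro s t
    have hper1 : Function.Periodic (fun a : ℝ => f (a • d₁ + t • d₂)) 1 := by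
      intro a
      show f ((a + 1) • d₁ + t • d₂) = _
      rw [add_smul, one_smul, add_right_comm, h1]
    have hper2 : Function.Periodic (fun a : ℝ => f (Int.fract s • d₁ + a • d₂)) 1 := by
      intro a
      show f (Int.fract s • d₁ + (a + 1) • d₂) = _
      rw [add_smul, one_smul, ← add_assoc, h2]
    have e1 : f (Int.fract s • d₁ + t • d₂) = f (s • d₁ + t • d₂) := by
      have h' := hper1.sub_int_mul_eq (x := s) (n := ⌊s⌋)
      rw [mul_one, Int.self_sub_floor] at h'
      exact h'
    have e2 : f (Int.fract s • d₁ + Int.fract t • d₂) = f (Int.fract s • d₁ + t • d₂) := by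
      have h' := hper2.sub_int_mul_eq (x := t) (n := ⌊t⌋)
      rw [mul_one, Int.self_sub_floor] at h'
      exact h'
    rw [e2, e1]
  intro ξ
  set u : E2 := A.symm ξ with hudef
  have hξ : ξ = u 0 • d₁ + u 1 • d₂ := by
    rw [← hAx u, hudef]
    simp
  set T : Set ℝ := (Set.range fun z : ℤ => (z : ℝ) - u 0)
      ∪ (Set.range fun z : ℤ => (z : ℝ) - u 1) with hT
  have hTc : T.Countable := (Set.countable_range _).union (Set.countable_range _)
  have hdense : Dense Tᶜ := hTc.dense_compl ℝ
  have hcont : Continuous fun ε : ℝ => f ((u 0 + ε) • d₁ + (u 1 + ε) • d₂) := by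
    apply hf.comp
    exact ((continuous_const.add continuous_id).smul continuous_const).add
      ((continuous_const.add continuous_id).smul continuous_const)
  have hzero : Set.EqOn (fun ε : ℝ => f ((u 0 + ε) • d₁ + (u 1 + ε) • d₂)) 0 Tᶜ := by
    intro ε hε
    have hfr : ∀ a : ℝ, Int.fract a ≠ 0 → Int.fract a ∈ Set.Ioo (0:ℝ) 1 := fun a ha =>
      ⟨lt_of_le_of_ne (Int.fract_nonneg _) (Ne.symm ha), Int.fract_lt_one _⟩
    have hs : Int.fract (u 0 + ε) ≠ 0 := by
      intro h0
      apply hε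
      left
      refine ⟨⌊u 0 + ε⌋, ?_⟩
      have h0' : u 0 + ε - (⌊u 0 + ε⌋ : ℝ) = 0 := by rw [Int.self_sub_floor]; exact h0
      show (⌊u 0 + ε⌋ : ℝ) - u 0 = ε
      linarith
    have ht : Int.fract (u 1 + ε) ≠ 0 := by
      intro h0
      apply hε
      right
      refine ⟨⌊u 1 + ε⌋, ?_⟩
      have h0' : u 1 + ε - (⌊u 1 + ε⌋ : ℝ) = 0 := by rw [Int.self_sub_floor]; exact h0
      show (⌊u 1 + ε⌋ : ℝ) - u 1 = ε
      linarith
    show f _ = 0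
    rw [hfrac]
    exact hV _ _ (hfr _ hs) (hfr _ ht)
  have hall := Continuous.ext_on hdense hcont continuous_const hzero
  have h00 := congrFun hall 0
  simp only [add_zero, Pi.zero_apply] at h00
  rw [hξ]
  exact h00

end Vanishing

/-- Euler–Lagrange characterization of biharmonic unit vector fields on a 2-torus,
in terms of angle functions (Theorem 5.6(i)):  the first variation of the bienergy
vanishes against all smooth periodic β iff Δ(Δθ + div Z) = div(k²(∇θ + Z)). -/
theorem biharmonic_unit_vector_field_euler_lagrange
    (d₁ d₂ : E2) (hd : LinearIndependent ℝ ![d₁, d₂])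
    (k : E2 → ℝ) (Z : E2 → E2)
    (hk : ContDiff ℝ (⊤ : ℕ∞) k) (hZ : ContDiff ℝ (⊤ : ℕ∞) Z)
    (hk_per : ∀ ξ : E2, k (ξ + d₁) = k ξ ∧ k (ξ + d₂) = k ξ)
    (hZ_per : ∀ ξ : E2, Z (ξ + d₁) = Z ξ ∧ Z (ξ + d₂) = Z ξ)
    (θ : E2 → ℝ) (hθ : ContDiff ℝ (⊤ : ℕ∞) θ)
    (m n : ℤ)
    (hθ_semiper : ∀ ξ : E2,
      θ (ξ + d₁) = θ ξ + 2 * π * (m : ℝ) ∧ θ (ξ + d₂) = θ ξ + 2 * π * (n : ℝ)) :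
    (∀ β : E2 → ℝ, ContDiff ℝ (⊤ : ℕ∞) β →
        (∀ ξ : E2, β (ξ + d₁) = β ξ ∧ β (ξ + d₂) = β ξ) →
        (∫ ξ in cell d₁ d₂,
          ((lap θ ξ + div2 Z ξ) * lap β ξ
            + (k ξ) ^ 2 * (inner ℝ (grad2 θ ξ + Z ξ) (grad2 β ξ) : ℝ))) = 0)
    ↔ (∀ ξ : E2, lap (fun y => lap θ y + div2 Z y) ξ
        = div2 (fun y => (k y) ^ 2 • (grad2 θ y + Z y)) ξ) := by
  set F : E2 → ℝ := fun y => lap θ y + div2 Z y with hFdef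
  set KG : E2 → E2 := fun y => (k y) ^ 2 • (grad2 θ y + Z y) with hKGdef
  set fEL : E2 → ℝ := fun y => lap F y - div2 KG y with hfELdef
  -- smoothness
  have hF : ContDiff ℝ (⊤ : ℕ∞) F := (lap_contDiff hθ).add (div2_contDiff hZ)
  have hGs : ContDiff ℝ (⊤ : ℕ∞) fun y => grad2 θ y + Z y := (grad2_contDiff hθ).add hZ
  have hKGs : ContDiff ℝ (⊤ : ℕ∞) KG := (hk.pow 2).smul hGs
  have hfELs : ContDiff ℝ (⊤ : ℕ∞) fEL := (lap_contDiff hF).sub (div2_contDiff hKGs)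
  -- periodicity
  have hθ1 : ∀ y, θ (y + d₁) = θ y + 2 * π * (m : ℝ) := fun y => (hθ_semiper y).1
  have hθ2 : ∀ y, θ (y + d₂) = θ y + 2 * π * (n : ℝ) := fun y => (hθ_semiper y).2
  have hgradθ1 : ∀ x, grad2 θ (x + d₁) = grad2 θ x :=
    grad2_shift (hθ.differentiable (by simp)) hθ1
  have hgradθ2 : ∀ x, grad2 θ (x + d₂) = grad2 θ x :=
    grad2_shift (hθ.differentiable (by simp)) hθ2
  have hF1 : ∀ ξ, F (ξ + d₁) = F ξ := fun ξ => by
    show lap θ (ξ + d₁) + div2 Z (ξ + d₁) = _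
    rw [lap_shift hθ hθ1 ξ, div2_shift hZ (fun y => (hZ_per y).1) ξ]
  have hF2 : ∀ ξ, F (ξ + d₂) = F ξ := fun ξ => by
    show lap θ (ξ + d₂) + div2 Z (ξ + d₂) = _
    rw [lap_shift hθ hθ2 ξ, div2_shift hZ (fun y => (hZ_per y).2) ξ]
  have hF1' : ∀ ξ, F (ξ + d₁) = F ξ + 0 := fun ξ => by rw [hF1, add_zero]
  have hF2' : ∀ ξ, F (ξ + d₂) = F ξ + 0 := fun ξ => by rw [hF2, add_zero]
  have hKG1 : ∀ ξ, KG (ξ + d₁) = KG ξ := fun ξ => by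
    show k (ξ + d₁) ^ 2 • (grad2 θ (ξ + d₁) + Z (ξ + d₁)) = _
    rw [(hk_per ξ).1, hgradθ1, (hZ_per ξ).1]
  have hKG2 : ∀ ξ, KG (ξ + d₂) = KG ξ := fun ξ => by
    show k (ξ + d₂) ^ 2 • (grad2 θ (ξ + d₂) + Z (ξ + d₂)) = _
    rw [(hk_per ξ).2, hgradθ2, (hZ_per ξ).2]
  have hfEL1 : ∀ ξ, fEL (ξ + d₁) = fEL ξ := fun ξ => by
    show lap F (ξ + d₁) - div2 KG (ξ + d₁) = _
    rw [lap_shift hF hF1' ξ, div2_shift hKGs hKG1 ξ]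
  have hfEL2 : ∀ ξ, fEL (ξ + d₂) = fEL ξ := fun ξ => by
    show lap F (ξ + d₂) - div2 KG (ξ + d₂) = _
    rw [lap_shift hF hF2' ξ, div2_shift hKGs hKG2 ξ]
  -- the representation of the first variation
  have Hrep : ∀ β : E2 → ℝ, ContDiff ℝ (⊤ : ℕ∞) β →
      (∀ ξ : E2, β (ξ + d₁) = β ξ ∧ β (ξ + d₂) = β ξ) →
      (∫ ξ in cell d₁ d₂,
          ((lap θ ξ + div2 Z ξ) * lap β ξ
            + (k ξ) ^ 2 * (inner ℝ (grad2 θ ξ + Z ξ) (grad2 β ξ) : ℝ)))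
        = ∫ ξ in cell d₁ d₂, β ξ * fEL ξ := by
    intro β hβ hβper
    have hβ1' : ∀ ξ, β (ξ + d₁) = β ξ + 0 := fun ξ => by rw [(hβper ξ).1, add_zero]
    have hβ2' : ∀ ξ, β (ξ + d₂) = β ξ + 0 := fun ξ => by rw [(hβper ξ).2, add_zero]
    have hYs : ContDiff ℝ (⊤ : ℕ∞) fun y =>
        (F y • grad2 β y + β y • KG y) - β y • grad2 F y :=
      ((hF.smul (grad2_contDiff hβ)).add (hβ.smul hKGs)).sub (hβ.smul (grad2_contDiff hF))
    have hY1 : ∀ ξ, (fun y => (F y • grad2 β y + β y • KG y) - β y • grad2 F y) (ξ + d₁)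
        = (fun y => (F y • grad2 β y + β y • KG y) - β y • grad2 F y) ξ := by
      intro ξ
      simp only
      rw [hF1, (hβper ξ).1, hKG1, grad2_shift (hβ.differentiable (by simp)) hβ1',
        grad2_shift (hF.differentiable (by simp)) hF1']
    have hY2 : ∀ ξ, (fun y => (F y • grad2 β y + β y • KG y) - β y • grad2 F y) (ξ + d₂)
        = (fun y => (F y • grad2 β y + β y • KG y) - β y • grad2 F y) ξ := by
      intro ξ
      simp only
      rw [hF2, (hβper ξ).2, hKG2, grad2_shift (hβ.differentiable (by simp)) hβ2',
        grad2_shift (hF.differentiable (by simp)) hF2']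
    have hY0 := integral_div2_cell_eq_zero d₁ d₂ hd _ hYs hY1 hY2
    have hpt : ∀ ξ, div2 (fun y => (F y • grad2 β y + β y • KG y) - β y • grad2 F y) ξ
        = ((lap θ ξ + div2 Z ξ) * lap β ξ
            + (k ξ) ^ 2 * (inner ℝ (grad2 θ ξ + Z ξ) (grad2 β ξ) : ℝ)) - β ξ * fEL ξ := by
      intro ξ
      rw [div2_sub (P := fun y => F y • grad2 β y + β y • KG y) (Q := fun y => β y • grad2 F y) ((hF.smul (grad2_contDiff hβ)).add (hβ.smul hKGs))
          (hβ.smul (grad2_contDiff hF)) ξ,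
        div2_add (P := fun y => F y • grad2 β y) (Q := fun y => β y • KG y) (hF.smul (grad2_contDiff hβ)) (hβ.smul hKGs) ξ,
        div2_smul hF (grad2_contDiff hβ) ξ, div2_smul hβ hKGs ξ,
        div2_smul hβ (grad2_contDiff hF) ξ]
      have c1 : div2 (grad2 β) ξ = lap β ξ := rfl
      have c2 : div2 (grad2 F) ξ = lap F ξ := rfl
      have c3 : (inner ℝ (grad2 F ξ) (grad2 β ξ) : ℝ) = inner ℝ (grad2 β ξ) (grad2 F ξ) :=
        real_inner_comm _ _
      have c4 : (inner ℝ (grad2 β ξ) (KG ξ) : ℝ)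
          = (k ξ) ^ 2 * (inner ℝ (grad2 θ ξ + Z ξ) (grad2 β ξ) : ℝ) := by
        rw [show KG ξ = (k ξ) ^ 2 • (grad2 θ ξ + Z ξ) from rfl, real_inner_smul_right,
          real_inner_comm]
      have c5 : F ξ = lap θ ξ + div2 Z ξ := rfl
      have c6 : fEL ξ = lap F ξ - div2 KG ξ := rfl
      rw [c1, c2, c3, c4, c6, ← c5]
      ring
    have hint1 : IntegrableOn
        (fun ξ => div2 (fun y => (F y • grad2 β y + β y • KG y) - β y • grad2 F y) ξ)
        (cell d₁ d₂) := integrableOn_cell (div2_contDiff hYs).continuous d₁ d₂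
    have hint2 : IntegrableOn (fun ξ => β ξ * fEL ξ) (cell d₁ d₂) :=
      integrableOn_cell (hβ.continuous.mul hfELs.continuous) d₁ d₂
    have hintegrand : (fun ξ => (lap θ ξ + div2 Z ξ) * lap β ξ
            + (k ξ) ^ 2 * (inner ℝ (grad2 θ ξ + Z ξ) (grad2 β ξ) : ℝ))
        = fun ξ => div2 (fun y => (F y • grad2 β y + β y • KG y) - β y • grad2 F y) ξ
            + β ξ * fEL ξ := by
      funext ξ
      rw [hpt ξ]
      ring
    rw [hintegrand, integral_add hint1 hint2, hY0, zero_add]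
  constructor
  · intro hvar ξ
    have hperpair : ∀ ξ : E2, fEL (ξ + d₁) = fEL ξ ∧ fEL (ξ + d₂) = fEL ξ :=
      fun ξ => ⟨hfEL1 ξ, hfEL2 ξ⟩
    have h0 := hvar fEL hfELs hperpair
    rw [Hrep fEL hfELs hperpair] at h0
    have hzero := eq_zero_of_integral_sq d₁ d₂ hd hfELs.continuous hfEL1 hfEL2 h0
    have := hzero ξ
    have h' : lap F ξ - div2 KG ξ = 0 := this
    linarith [h']
  · intro hEL β hβ hβper
    rw [Hrep β hβ hβper]
    have hfEL0 : ∀ ξ, fEL ξ = 0 := fun ξ => sub_eq_zero_of_eq (hEL ξ)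
    simp only [hfEL0, mul_zero, integral_zero]
end
end

section
/- Let λ₁ > λ₂ > λ₃ > 0, set μᵢ = (λ₁+λ₂+λ₃)/2 − λᵢ, a = μ₂²+μ₃², b = μ₁²+μ₃², c = μ₁²+μ₂², and A = a x² + b y² + c z². Then for (x, y, z) ∈ ℝ³ with x² + y² + z² = 1, the following are equivalent: (i) there exists λ' ∈ ℝ with x·(a² − 2aA − λ') = 0, y·(b² − 2bA − λ') = 0, z·(c² − 2cA − λ') = 0, and there is NO ν ∈ ℝ with a x = ν x, b y = ν y, c z = ν z; (ii) exactly one coordinate is zero and the other two have squares equal to 1/2, i.e. (x = 0 ∧ y² = 1/2 ∧ z² = 1/2) ∨ (y = 0 ∧ x² = 1/2 ∧ z² = 1/2) ∨ (z = 0 ∧ x² = 1/2 ∧ y² = 1/2). (Paper's Theorem 3.1, case λ₁ > λ₂ > λ₃: the only non-harmonic biharmonic unit sections among left-invariant unit vector fields on SU(2) are the twelve vectors ±(1/√2)eᵢ ± (1/√2)eⱼ with i ≠ j.) -/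
/-!
If two coordinates `vᵢ, vⱼ` of the unit field are nonzero, the biharmonic equations for `i` and
`j` subtract to `(eᵢ - eⱼ)(eᵢ + eⱼ - 2A) = 0`, so `eᵢ + eⱼ = 2A` once the eigenvalues are
distinct. A third nonzero coordinate `k` would give `eⱼ = eₖ`, so a biharmonic field has at most
two nonzero coordinates, while it is non-harmonic exactly when it has at least two. On a support
`{i, j}` the relation `eᵢ + eⱼ = 2(eᵢvᵢ² + eⱼvⱼ²)` with `vᵢ² + vⱼ² = 1` becomes
`(eᵢ - eⱼ)(1 - 2vᵢ²) = 0`. Conversely, such fields solve the equations with `λ' = -eᵢeⱼ`.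
On SU(2) the eigenvalues are distinct because `a - b = (λ₁ - λ₂)λ₃` and `b - c = (λ₂ - λ₃)λ₁`.
-/

open Finset

theorem add_eq_two_mul_of_mul_eq_zero {p q u w A l : ℝ} (hpq : p ≠ q) (hu : u ≠ 0) (hw : w ≠ 0)
    (hpu : u * (p ^ 2 - 2 * p * A - l) = 0) (hqw : w * (q ^ 2 - 2 * q * A - l) = 0) :
    p + q = 2 * A := by
  have hp := (mul_eq_zero.mp hpu).resolve_left hu
  have hq := (mul_eq_zero.mp hqw).resolve_left hw
  have hprod : (p - q) * (p + q - 2 * A) = 0 := by linear_combination hp - hq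
  linarith [(mul_eq_zero.mp hprod).resolve_left (sub_ne_zero.mpr hpq)]

theorem sq_eq_half_of_add_eq_two_mul {p q u w : ℝ} (hpq : p ≠ q) (huw : u ^ 2 + w ^ 2 = 1)
    (h : p + q = 2 * (p * u ^ 2 + q * w ^ 2)) : u ^ 2 = 1 / 2 ∧ w ^ 2 = 1 / 2 := by
  have hprod : (p - q) * (1 - 2 * u ^ 2) = 0 := by linear_combination h + 2 * q * huw
  have hu := (mul_eq_zero.mp hprod).resolve_left (sub_ne_zero.mpr hpq)
  constructor <;> linarith

/- `e` lists the paper's constants `a, b, c` and `v` the coordinates of the left-invariant field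
in the Milnor frame; `weightedNormSq e v` is the paper's `A`. -/
section UnitSections

variable {ι : Type*} {e v : ι → ℝ} {i j : ι}

def IsHarmonicSection (e v : ι → ℝ) : Prop := ∃ ν, ∀ k, e k * v k = ν * v k

theorem exists_ne_of_not_isHarmonicSection (h : ¬ IsHarmonicSection e v) :
    ∃ i j, i ≠ j ∧ v i ≠ 0 ∧ v j ≠ 0 := by
  by_contra! hsupp
  apply h
  by_cases hv : ∃ i, v i ≠ 0
  · obtain ⟨i, hi⟩ := hv
    refine ⟨e i, fun k => ?_⟩
    rcases eq_or_ne k i with rfl | hki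
    · rfl
    · simp [hsupp i k hki.symm hi]
  · push Not at hv
    exact ⟨0, fun k => by simp [hv k]⟩

theorem not_isHarmonicSection_of_ne_zero (he : Function.Injective e) (hij : i ≠ j)
    (hi : v i ≠ 0) (hj : v j ≠ 0) : ¬ IsHarmonicSection e v := fun ⟨_, h⟩ =>
  hij (he ((mul_right_cancel₀ hi (h i)).trans (mul_right_cancel₀ hj (h j)).symm))

variable [Fintype ι]

def weightedNormSq (e v : ι → ℝ) : ℝ := ∑ k, e k * v k ^ 2

def IsBiharmonicSection (e v : ι → ℝ) : Prop :=
  ∃ l, ∀ k, v k * (e k ^ 2 - 2 * e k * weightedNormSq e v - l) = 0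

theorem IsBiharmonicSection.add_eq_two_mul (h : IsBiharmonicSection e v) (hij : e i ≠ e j)
    (hi : v i ≠ 0) (hj : v j ≠ 0) : e i + e j = 2 * weightedNormSq e v :=
  let ⟨_, hl⟩ := h
  add_eq_two_mul_of_mul_eq_zero hij hi hj (hl i) (hl j)

theorem IsBiharmonicSection.eq_zero_of_ne (h : IsBiharmonicSection e v)
    (he : Function.Injective e) (hij : i ≠ j) (hi : v i ≠ 0) (hj : v j ≠ 0) {k : ι}
    (hki : k ≠ i) (hkj : k ≠ j) : v k = 0 := by
  by_contra hk
  have hsum_ij := h.add_eq_two_mul (he.ne hij) hi hj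
  have hsum_ik := h.add_eq_two_mul (he.ne hki.symm) hi hk
  exact hkj (he (by linarith))

theorem eq_zero_of_sq_eq_half (hv : ∑ k, v k ^ 2 = 1) (hij : i ≠ j) (hi : v i ^ 2 = 1 / 2)
    (hj : v j ^ 2 = 1 / 2) {k : ι} (hki : k ≠ i) (hkj : k ≠ j) : v k = 0 := by
  classical
  have hle : ∑ m ∈ {i, j, k}, v m ^ 2 ≤ ∑ m, v m ^ 2 :=
    sum_le_univ_sum_of_nonneg fun _ => sq_nonneg _
  rw [sum_insert (by simp [hij, hki.symm]), sum_pair hkj.symm, hv, hi, hj] at hle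
  exact pow_eq_zero_iff two_ne_zero |>.mp (le_antisymm (by linarith) (sq_nonneg _))

theorem isBiharmonicSection_and_not_isHarmonicSection_iff (he : Function.Injective e)
    (hv : ∑ k, v k ^ 2 = 1) :
    IsBiharmonicSection e v ∧ ¬ IsHarmonicSection e v ↔
      ∃ i j, i ≠ j ∧ v i ^ 2 = 1 / 2 ∧ v j ^ 2 = 1 / 2 := by
  constructor
  · rintro ⟨hbh, hnh⟩
    obtain ⟨i, j, hij, hi, hj⟩ := exists_ne_of_not_isHarmonicSection hnh
    have hsupp (k : ι) (hk : k ≠ i ∧ k ≠ j) : v k = 0 := hbh.eq_zero_of_ne he hij hi hj hk.1 hk.2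
    have hunit : v i ^ 2 + v j ^ 2 = 1 := by
      rwa [Fintype.sum_eq_add i j hij fun k hk => by simp [hsupp k hk]] at hv
    have hA : weightedNormSq e v = e i * v i ^ 2 + e j * v j ^ 2 :=
      Fintype.sum_eq_add i j hij fun k hk => by simp [hsupp k hk]
    refine ⟨i, j, hij, sq_eq_half_of_add_eq_two_mul (he.ne hij) hunit ?_⟩
    rw [← hA]
    exact hbh.add_eq_two_mul (he.ne hij) hi hj
  · rintro ⟨i, j, hij, hi, hj⟩
    have hi0 : v i ≠ 0 := fun h => by simp [h] at hi
    have hj0 : v j ≠ 0 := fun h => by simp [h] at hj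
    have hsupp (k : ι) (hk : k ≠ i ∧ k ≠ j) : v k = 0 :=
      eq_zero_of_sq_eq_half hv hij hi hj hk.1 hk.2
    have hA : weightedNormSq e v = (e i + e j) / 2 := by
      rw [weightedNormSq, Fintype.sum_eq_add i j hij fun k hk => by simp [hsupp k hk], hi, hj]
      ring
    refine ⟨⟨-(e i * e j), fun k => ?_⟩, not_isHarmonicSection_of_ne_zero he hij hi0 hj0⟩
    rw [hA]
    by_cases hk : k = i ∨ k = j
    · rcases hk with rfl | rfl <;> ring
    · simp [hsupp k (not_or.mp hk)]

end UnitSections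

section FinThree

variable {a b c x y z : ℝ}

theorem isBiharmonicSection_fin_three :
    IsBiharmonicSection ![a, b, c] ![x, y, z] ↔ ∃ l : ℝ,
      x * (a ^ 2 - 2 * a * (a * x ^ 2 + b * y ^ 2 + c * z ^ 2) - l) = 0 ∧
      y * (b ^ 2 - 2 * b * (a * x ^ 2 + b * y ^ 2 + c * z ^ 2) - l) = 0 ∧
      z * (c ^ 2 - 2 * c * (a * x ^ 2 + b * y ^ 2 + c * z ^ 2) - l) = 0 := by
  simp [IsBiharmonicSection, weightedNormSq, Fin.forall_fin_succ, Fin.sum_univ_three, add_assoc]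

theorem isHarmonicSection_fin_three :
    IsHarmonicSection ![a, b, c] ![x, y, z] ↔
      ∃ ν, a * x = ν * x ∧ b * y = ν * y ∧ c * z = ν * z := by
  simp [IsHarmonicSection, Fin.forall_fin_succ]

theorem exists_sq_eq_half_fin_three_iff (hxyz : x ^ 2 + y ^ 2 + z ^ 2 = 1) :
    (∃ i j, i ≠ j ∧ ![x, y, z] i ^ 2 = 1 / 2 ∧ ![x, y, z] j ^ 2 = 1 / 2) ↔
      (x = 0 ∧ y ^ 2 = 1 / 2 ∧ z ^ 2 = 1 / 2) ∨
      (y = 0 ∧ x ^ 2 = 1 / 2 ∧ z ^ 2 = 1 / 2) ∨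
      (z = 0 ∧ x ^ 2 = 1 / 2 ∧ y ^ 2 = 1 / 2) := by
  have hv : ∑ k, ![x, y, z] k ^ 2 = 1 := by simp [Fin.sum_univ_three, hxyz]
  constructor
  · rintro ⟨i, j, hij, hi, hj⟩
    have h0 (k : Fin 3) : k ≠ i → k ≠ j → ![x, y, z] k = 0 := eq_zero_of_sq_eq_half hv hij hi hj
    fin_cases i <;> fin_cases j <;> simp_all [Fin.forall_fin_succ]
  · rintro (⟨-, hy, hz⟩ | ⟨-, hx, hz⟩ | ⟨-, hx, hy⟩)
    exacts [⟨1, 2, by decide, hy, hz⟩, ⟨0, 2, by decide, hx, hz⟩, ⟨0, 1, by decide, hx, hy⟩]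

end FinThree

/-- Theorem 3.1, case λ₁ > λ₂ > λ₃ > 0: the only non-harmonic biharmonic unit
sections among left-invariant unit vector fields on SU(2) are the twelve vectors
±(1/√2)eᵢ ± (1/√2)eⱼ with i ≠ j (algebraic form). -/
theorem su2_generic_nonharmonic_biharmonic_sections
    (l₁ l₂ l₃ : ℝ) (h12 : l₁ > l₂) (h23 : l₂ > l₃) (h3 : 0 < l₃)
    (μ₁ μ₂ μ₃ : ℝ)
    (hμ₁ : μ₁ = (l₁ + l₂ + l₃) / 2 - l₁)
    (hμ₂ : μ₂ = (l₁ + l₂ + l₃) / 2 - l₂)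
    (hμ₃ : μ₃ = (l₁ + l₂ + l₃) / 2 - l₃)
    (a b c : ℝ)
    (ha : a = μ₂ ^ 2 + μ₃ ^ 2) (hb : b = μ₁ ^ 2 + μ₃ ^ 2) (hc : c = μ₁ ^ 2 + μ₂ ^ 2)
    (x y z : ℝ) (hxyz : x ^ 2 + y ^ 2 + z ^ 2 = 1)
    (A : ℝ) (hA : A = a * x ^ 2 + b * y ^ 2 + c * z ^ 2) :
    ((∃ l' : ℝ,
        x * (a ^ 2 - 2 * a * A - l') = 0 ∧
        y * (b ^ 2 - 2 * b * A - l') = 0 ∧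
        z * (c ^ 2 - 2 * c * A - l') = 0) ∧
      ¬ ∃ ν : ℝ, a * x = ν * x ∧ b * y = ν * y ∧ c * z = ν * z)
    ↔ ((x = 0 ∧ y ^ 2 = 1 / 2 ∧ z ^ 2 = 1 / 2) ∨
       (y = 0 ∧ x ^ 2 = 1 / 2 ∧ z ^ 2 = 1 / 2) ∨
       (z = 0 ∧ x ^ 2 = 1 / 2 ∧ y ^ 2 = 1 / 2)) := by
  have hab : a - b = (l₁ - l₂) * l₃ := by rw [ha, hb, hμ₁, hμ₂]; ring
  have hbc : b - c = (l₂ - l₃) * l₁ := by rw [hb, hc, hμ₂, hμ₃]; ring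
  have hba : b < a := by linarith [mul_pos (sub_pos.mpr h12) h3]
  have hcb : c < b := by linarith [mul_pos (sub_pos.mpr h23) (h3.trans (h23.trans h12))]
  have he : StrictAnti ![a, b, c] :=
    Fin.strictAnti_iff_succ_lt.mpr fun i => by fin_cases i; exacts [hba, hcb]
  subst hA
  rw [← isBiharmonicSection_fin_three, ← isHarmonicSection_fin_three,
    isBiharmonicSection_and_not_isHarmonicSection_iff he.injective
      (by simp [Fin.sum_univ_three, hxyz]),
    exists_sq_eq_half_fin_three_iff hxyz]
end
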